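/- Let $T_\mu : \mathcal{B}(X) \to \mathcal{B}(X)$ be a monotone $\alpha$-contraction with fixed point $J_\mu$, let $J^* \in \mathcal{B}(X)$ satisfy $J^* \le J_\mu$ pointwise, and let $J_0 \in \mathcal{B}(X)$ with $T_\mu J_0 \le J_0$ pointwise. Then $J^* \le J_\mu \le T_\mu^{(\lambda)} J_0 \le T_\mu J_0$ pointwise, where $T_\mu^{(\lambda)}$ is the $\lambda$-operator with $\lambda \in [0,1)$. -/

import Mathlib

open Filter Topology

noncomputable def wnorm {X : Type*} (v : X → ℝ) (J : X → ℝ) : ℝ := ⨆ x, |J x| / v x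

def memB {X : Type*} (v : X → ℝ) (J : X → ℝ) : Prop := ∃ C : ℝ, ∀ x, |J x| / v x ≤ C

/-
The iterates `T^ℓ J₀` decrease, by monotonicity of `T` and `T J₀ ≤ J₀`, and converge pointwise to
the fixed point `J_μ`, by the contraction estimate in the weighted norm. The limit of a decreasing
sequence lies below each of its terms, so `J_μ ≤ T^ℓ J₀ ≤ T J₀` for all `ℓ ≥ 1`, and the
λ-operator, being a convex combination of these iterates, lies between the same bounds.
-/

lemma memB_sub {X : Type*} {v : X → ℝ} (hv : ∀ x, 0 < v x) {J J' : X → ℝ}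
    (h : memB v J) (h' : memB v J') : memB v (fun x => J x - J' x) := by
  obtain ⟨C, hC⟩ := h
  obtain ⟨C', hC'⟩ := h'
  refine ⟨C + C', fun x => ?_⟩
  calc |J x - J' x| / v x ≤ |J x| / v x + |J' x| / v x := by
        rw [← add_div]
        exact div_le_div_of_nonneg_right (abs_sub _ _) (hv x).le
    _ ≤ C + C' := add_le_add (hC x) (hC' x)

lemma abs_le_wnorm_mul {X : Type*} {v : X → ℝ} (hv : ∀ x, 0 < v x) {J : X → ℝ}
    (h : memB v J) (x : X) : |J x| ≤ wnorm v J * v x := by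
  obtain ⟨C, hC⟩ := h
  have hbdd : BddAbove (Set.range fun x => |J x| / v x) := ⟨C, by rintro _ ⟨y, rfl⟩; exact hC y⟩
  exact (div_le_iff₀ (hv x)).mp (le_ciSup hbdd x)

section Iterates

variable {X : Type*} {v : X → ℝ} {T : (X → ℝ) → (X → ℝ)}

lemma memB_iterate (hT : ∀ J, memB v J → memB v (T J)) {J : X → ℝ} (hJ : memB v J) (n : ℕ) :
    memB v (T^[n] J) := by
  induction n with
  | zero => exact hJ
  | succ n ih => rw [Function.iterate_succ_apply']; exact hT _ ih

lemma antitone_iterate_apply (hT : ∀ J, memB v J → memB v (T J))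
    (hmono : ∀ J J', memB v J → memB v J' → (∀ x, J x ≤ J' x) → ∀ x, T J x ≤ T J' x)
    {J : X → ℝ} (hJ : memB v J) (hdec : ∀ x, T J x ≤ J x) (x : X) :
    Antitone fun n => T^[n] J x := by
  suffices h : ∀ n x, T^[n + 1] J x ≤ T^[n] J x from antitone_nat_of_succ_le (h · x)
  intro n
  induction n with
  | zero => exact hdec
  | succ n ih =>
    simpa only [Function.iterate_succ_apply'] using
      hmono _ _ (memB_iterate hT hJ (n + 1)) (memB_iterate hT hJ n) ih

variable {α : ℝ}
  (hT : ∀ J, memB v J → memB v (T J))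
  (hcontr : ∀ J J', memB v J → memB v J' →
    wnorm v (fun x => T J x - T J' x) ≤ α * wnorm v (fun x => J x - J' x))
  {Jmu : X → ℝ} (hJmu : memB v Jmu) (hfix : T Jmu = Jmu)
include hT hcontr hJmu hfix

lemma wnorm_iterate_sub_fixedPoint_le (hα : 0 ≤ α) {J : X → ℝ} (hJ : memB v J) (n : ℕ) :
    wnorm v (fun x => T^[n] J x - Jmu x) ≤ α ^ n * wnorm v (fun x => J x - Jmu x) := by
  induction n with
  | zero => simp
  | succ n ih =>
    calc wnorm v (fun x => T^[n + 1] J x - Jmu x)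
        = wnorm v (fun x => T (T^[n] J) x - T Jmu x) := by
          rw [Function.iterate_succ_apply', hfix]
      _ ≤ α * wnorm v (fun x => T^[n] J x - Jmu x) := hcontr _ _ (memB_iterate hT hJ n) hJmu
      _ ≤ α * (α ^ n * wnorm v (fun x => J x - Jmu x)) := mul_le_mul_of_nonneg_left ih hα
      _ = α ^ (n + 1) * wnorm v (fun x => J x - Jmu x) := by ring

lemma tendsto_iterate_apply_fixedPoint (hv : ∀ x, 0 < v x) (hα₀ : 0 ≤ α) (hα₁ : α < 1)
    {J : X → ℝ} (hJ : memB v J) (x : X) :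
    Tendsto (fun n => T^[n] J x) atTop (𝓝 (Jmu x)) := by
  set W := wnorm v (fun x => J x - Jmu x)
  have hbound : ∀ n, |T^[n] J x - Jmu x| ≤ α ^ n * W * v x := fun n =>
    (abs_le_wnorm_mul hv (memB_sub hv (memB_iterate hT hJ n) hJmu) x).trans
      (mul_le_mul_of_nonneg_right
        (wnorm_iterate_sub_fixedPoint_le hT hcontr hJmu hfix hα₀ hJ n) (hv x).le)
  have hlim : Tendsto (fun n : ℕ => α ^ n * W * v x) atTop (𝓝 0) := by
    simpa using ((tendsto_pow_atTop_nhds_zero_of_lt_one hα₀ hα₁).mul_const W).mul_const (v x)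
  rw [tendsto_iff_norm_sub_tendsto_zero]
  exact squeeze_zero (fun n => norm_nonneg _) hbound hlim

end Iterates

lemma one_sub_mul_tsum_geometric_mul_mem_Icc {lam lo hi : ℝ} (hlam₀ : 0 ≤ lam) (hlam₁ : lam < 1)
    {a : ℕ → ℝ} (ha : ∀ ℓ, a ℓ ∈ Set.Icc lo hi) :
    (1 - lam) * ∑' ℓ, lam ^ ℓ * a ℓ ∈ Set.Icc lo hi := by
  have hgeom : Summable fun ℓ : ℕ => lam ^ ℓ := summable_geometric_of_lt_one hlam₀ hlam₁
  have hconst : ∀ c : ℝ, Summable fun ℓ : ℕ => lam ^ ℓ * c := fun c => hgeom.mul_right c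
  have havg_const : ∀ c : ℝ, (1 - lam) * ∑' ℓ : ℕ, lam ^ ℓ * c = c := fun c => by
    rw [tsum_mul_right, tsum_geometric_of_lt_one hlam₀ hlam₁]
    field_simp [(sub_pos.mpr hlam₁).ne']
  have hsum : Summable fun ℓ => lam ^ ℓ * a ℓ := by
    refine Summable.of_norm_bounded (hconst (max |lo| |hi|)) fun ℓ => ?_
    rw [Real.norm_eq_abs, abs_mul, abs_of_nonneg (pow_nonneg hlam₀ ℓ)]
    exact mul_le_mul_of_nonneg_left
      (abs_le_max_abs_abs (ha ℓ).1 (ha ℓ).2) (pow_nonneg hlam₀ ℓ)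
  have hlam : 0 ≤ 1 - lam := sub_nonneg.mpr hlam₁.le
  have hterm : ∀ {b c : ℕ → ℝ}, (∀ ℓ, b ℓ ≤ c ℓ) → ∀ ℓ, lam ^ ℓ * b ℓ ≤ lam ^ ℓ * c ℓ :=
    fun h ℓ => mul_le_mul_of_nonneg_left (h ℓ) (pow_nonneg hlam₀ ℓ)
  constructor
  · calc lo = (1 - lam) * ∑' ℓ : ℕ, lam ^ ℓ * lo := (havg_const lo).symm
      _ ≤ (1 - lam) * ∑' ℓ, lam ^ ℓ * a ℓ := mul_le_mul_of_nonneg_left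
          ((hconst lo).tsum_le_tsum (hterm fun ℓ => (ha ℓ).1) hsum) hlam
  · calc (1 - lam) * ∑' ℓ, lam ^ ℓ * a ℓ ≤ (1 - lam) * ∑' ℓ : ℕ, lam ^ ℓ * hi :=
          mul_le_mul_of_nonneg_left (hsum.tsum_le_tsum (hterm fun ℓ => (ha ℓ).2) (hconst hi)) hlam
      _ = hi := havg_const hi

theorem stmt13_general {X : Type*} (v : X → ℝ) (hv : ∀ x, 0 < v x)
    (T : (X → ℝ) → (X → ℝ)) (α : ℝ) (hα : α ∈ Set.Ioo (0 : ℝ) 1)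
    (hT : ∀ J, memB v J → memB v (T J))
    (hcontr : ∀ J J', memB v J → memB v J' →
      wnorm v (fun x => T J x - T J' x) ≤ α * wnorm v (fun x => J x - J' x))
    (hmono : ∀ J J', memB v J → memB v J' → (∀ x, J x ≤ J' x) →
      ∀ x, T J x ≤ T J' x)
    (Jmu : X → ℝ) (hJmu : memB v Jmu) (hfix : T Jmu = Jmu)
    (Jstar : X → ℝ) (hle : ∀ x, Jstar x ≤ Jmu x)
    (lam : ℝ) (hlam : lam ∈ Set.Ico (0 : ℝ) 1)
    (J0 : X → ℝ) (hJ0 : memB v J0) (hdec : ∀ x, T J0 x ≤ J0 x) :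
    ∀ x, Jstar x ≤ Jmu x ∧
      Jmu x ≤ (1 - lam) * ∑' ℓ : ℕ, lam ^ ℓ * (T^[ℓ + 1] J0) x ∧
      ((1 - lam) * ∑' ℓ : ℕ, lam ^ ℓ * (T^[ℓ + 1] J0) x) ≤ T J0 x := by
  intro x
  have hanti := antitone_iterate_apply hT hmono hJ0 hdec x
  have hlim := tendsto_iterate_apply_fixedPoint hT hcontr hJmu hfix hv hα.1.le hα.2 hJ0 x
  have hbounds : ∀ ℓ : ℕ, (T^[ℓ + 1] J0) x ∈ Set.Icc (Jmu x) (T J0 x) := fun ℓ =>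
    ⟨hanti.le_of_tendsto hlim (ℓ + 1), hanti (Nat.le_add_left 1 ℓ)⟩
  have havg := one_sub_mul_tsum_geometric_mul_mem_Icc hlam.1 hlam.2 hbounds
  exact ⟨hle x, havg.1, havg.2⟩

/-- if `T_μ` is a monotone `α`-contraction with fixed point
`J_μ`, `J* ≤ J_μ`, and `T_μ J₀ ≤ J₀`, then
`J* ≤ J_μ ≤ T_μ^{(λ)} J₀ ≤ T_μ J₀` pointwise. -/
theorem stmt13 {X : Type*} [Nonempty X] (v : X → ℝ) (hv : ∀ x, 0 < v x)
    (T : (X → ℝ) → (X → ℝ)) (α : ℝ) (hα : α ∈ Set.Ioo (0 : ℝ) 1)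
    (hT : ∀ J, memB v J → memB v (T J))
    (hcontr : ∀ J J', memB v J → memB v J' →
      wnorm v (fun x => T J x - T J' x) ≤ α * wnorm v (fun x => J x - J' x))
    (hmono : ∀ J J', memB v J → memB v J' → (∀ x, J x ≤ J' x) →
      ∀ x, T J x ≤ T J' x)
    (Jmu : X → ℝ) (hJmu : memB v Jmu) (hfix : T Jmu = Jmu)
    (Jstar : X → ℝ) (hJstar : memB v Jstar) (hle : ∀ x, Jstar x ≤ Jmu x)
    (lam : ℝ) (hlam : lam ∈ Set.Ico (0 : ℝ) 1)
    (J0 : X → ℝ) (hJ0 : memB v J0) (hdec : ∀ x, T J0 x ≤ J0 x) :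
    ∀ x, Jstar x ≤ Jmu x ∧
      Jmu x ≤ (1 - lam) * ∑' ℓ : ℕ, lam ^ ℓ * (T^[ℓ + 1] J0) x ∧
      ((1 - lam) * ∑' ℓ : ℕ, lam ^ ℓ * (T^[ℓ + 1] J0) x) ≤ T J0 x :=
  stmt13_general v hv T α hα hT hcontr hmono Jmu hJmu hfix Jstar hle lam hlam J0 hJ0 hdec
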